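/- arXiv:2409.03559 — 2 statements merged into one kernel-verified Lean document; each statement's English description precedes it below -/
import Mathlib

section
/- Consider real numbers a₂₁, a₃₁, a₄₂, a₄₃ all nonzero. Define F : ℝ → ℝ by F(u) = a₄₂·(a₂₁·u³)³ + a₄₃·(a₃₁·u³)³. Then for any γ ≠ 0, the functions f̃₄₂(x) = (a₄₂ + γ·a₃₁³/a₂₁³)·x³ and f̃₄₃(x) = (a₄₃ − γ)·x³ satisfy f̃₄₂(a₂₁·u³) + f̃₄₃(a₃₁·u³) = F(u) for all u ∈ ℝ, while (f̃₄₂, f̃₄₃) ≠ (x ↦ a₄₂·x³, x ↦ a₄₃·x³). -/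
/-- Non-identifiability counterexample for the diamond DAG with
cubic edge functions. -/
theorem stmt_3 (a21 a31 a42 a43 γ : ℝ)
    (h21 : a21 ≠ 0) (h31 : a31 ≠ 0) (h42 : a42 ≠ 0) (h43 : a43 ≠ 0)
    (hγ : γ ≠ 0) :
    (∀ u : ℝ,
      (a42 + γ * a31 ^ 3 / a21 ^ 3) * (a21 * u ^ 3) ^ 3
        + (a43 - γ) * (a31 * u ^ 3) ^ 3
      = a42 * (a21 * u ^ 3) ^ 3 + a43 * (a31 * u ^ 3) ^ 3) ∧
    ¬ ((fun x : ℝ => (a42 + γ * a31 ^ 3 / a21 ^ 3) * x ^ 3)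
          = (fun x : ℝ => a42 * x ^ 3) ∧
       (fun x : ℝ => (a43 - γ) * x ^ 3) = (fun x : ℝ => a43 * x ^ 3)) := by
  constructor
  · intro u
    field_simp
    ring
  · rintro ⟨-, h⟩
    have := congrFun h 1
    simp at this
    exact hγ (by linarith)
end

section
/- Let Φ : ℝᵖ → ℝᵐ be continuously differentiable, let F, F̃ : ℝᵐ → ℝ be analytic on ℝᵐ, and suppose F ∘ Φ = F̃ ∘ Φ on ℝᵖ. If there exists a point w* where the derivative DΦ(w*) is surjective, then F = F̃ on all of ℝᵐ. -/
open Topology Filter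

theorem HasStrictFDerivAt.eventuallyEq_of_comp_eventuallyEq
    {E F : Type*} [NormedAddCommGroup E] [NormedSpace ℝ E] [CompleteSpace E]
    [NormedAddCommGroup F] [NormedSpace ℝ F] [CompleteSpace F] {X : Type*}
    {Φ : E → F} {Φ' : E →L[ℝ] F} {w : E} (hΦ : HasStrictFDerivAt Φ Φ' w)
    (hsurj : Function.Surjective Φ') {f g : F → X} (h : f ∘ Φ =ᶠ[𝓝 w] g ∘ Φ) :
    f =ᶠ[𝓝 (Φ w)] g := by
  rw [EventuallyEq, ← hΦ.map_nhds_eq_of_surj (LinearMap.range_eq_top.2 hsurj)]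
  exact h

/-- If `F ∘ Φ = F' ∘ Φ` with `Φ` continuously differentiable and
having a surjective derivative at some point, and `F, F'` analytic on ℝᵐ,
then `F = F'`. -/
theorem stmt_16 (p m : ℕ) (Φ : (Fin p → ℝ) → (Fin m → ℝ))
    (F F' : (Fin m → ℝ) → ℝ)
    (hΦ : ContDiff ℝ 1 Φ)
    (hF : ∀ x, AnalyticAt ℝ F x) (hF' : ∀ x, AnalyticAt ℝ F' x)
    (heq : ∀ w, F (Φ w) = F' (Φ w))
    (hsurj : ∃ w : Fin p → ℝ, Function.Surjective (fderiv ℝ Φ w)) :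
    F = F' := by
  obtain ⟨w, hw⟩ := hsurj
  have hlocal : F =ᶠ[𝓝 (Φ w)] F' :=
    (hΦ.contDiffAt.hasStrictFDerivAt one_ne_zero).eventuallyEq_of_comp_eventuallyEq hw
      (Eventually.of_forall heq)
  exact AnalyticOnNhd.eq_of_eventuallyEq (fun x _ => hF x) (fun x _ => hF' x) hlocal
end
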